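/- Power transform CN inequality: Let (M,d) be a global NPC space, let γ:[0,1] → M be a geodesic, and let α ∈ [1,2]. Then for any δ > 0, any t ∈ [0,1], and any z ∈ M, d(γ_t,z)^α ≤ (1+δ)^{1−α/2}[(1−t)^{α/2} d(γ₀,z)^α + t^{α/2} d(γ₁,z)^α] − δ^{1−α/2}[t(1−t) d(γ₀,γ₁)²]^{α/2}. -/

import Mathlib

/-!
A geodesic midpoint of two points is their NPC midpoint, so the NPC inequality holds at
midpoints along a geodesic. Hence
`r ↦ d(γ_r,z)² - ((1-r) d(γ₀,z)² + r d(γ₁,z)² - r(1-r) d(γ₀,γ₁)²)` is continuous, midpoint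
convex and vanishes at `0` and `1`, so it is nonpositive: this is the CN inequality
`d(γ_t,z)² + t(1-t) d(γ₀,γ₁)² ≤ (1-t) d(γ₀,z)² + t d(γ₁,z)²`. Raising it to the power
`p = α/2 ≤ 1`, concavity of `x ↦ x ^ p` splits the left side at the cost of the factors
`(1+δ) ^ (1-p)` and `δ ^ (1-p)`, and subadditivity of `x ↦ x ^ p` splits the right side.
-/

open Set

/-- A Polish metric space is a (global) NPC space if midpoints satisfying the NPC
inequality always exist. -/
def IsNPC (M : Type*) [MetricSpace M] : Prop :=
  ∀ x₀ x₁ : M, ∃ y : M, ∀ z : M,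
    dist z y ^ 2 ≤
      (1 / 2) * dist z x₀ ^ 2 + (1 / 2) * dist z x₁ ^ 2 - (1 / 4) * dist x₀ x₁ ^ 2

/-- A geodesic `γ : [0,1] → M` (as a map on `ℝ`, constrained on `[0,1]`). -/
def IsGeodesic {M : Type*} [MetricSpace M] (γ : ℝ → M) : Prop :=
  ∀ s ∈ Set.Icc (0 : ℝ) 1, ∀ t ∈ Set.Icc (0 : ℝ) 1,
    dist (γ s) (γ t) = |s - t| * dist (γ 0) (γ 1)

theorem nonpos_of_midpoint_convex {f : ℝ → ℝ} {a b : ℝ} (hf : ContinuousOn f (Icc a b))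
    (hmid : ∀ x ∈ Icc a b, ∀ y ∈ Icc a b, f ((x + y) / 2) ≤ (f x + f y) / 2)
    (ha : f a ≤ 0) (hb : f b ≤ 0) {t : ℝ} (ht : t ∈ Icc a b) : f t ≤ 0 := by
  obtain ⟨t₀, ht₀, hmax⟩ := isCompact_Icc.exists_isMaxOn ⟨t, ht⟩ hf
  by_contra! hpos
  have hm : 0 < f t₀ := hpos.trans_le (hmax ht)
  -- the leftmost maximiser `s` is interior, and midpoint convexity around it
  -- produces a maximiser further left
  have hclosed : IsClosed (Icc a b ∩ f ⁻¹' {f t₀}) :=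
    hf.preimage_isClosed_of_isClosed isClosed_Icc isClosed_singleton
  obtain ⟨s, ⟨hs, hfs⟩, hleast⟩ :=
    (isCompact_Icc.of_isClosed_subset hclosed inter_subset_left).exists_isLeast ⟨t₀, ht₀, rfl⟩
  replace hfs : f s = f t₀ := hfs
  have has : a < s := hs.1.lt_of_ne (by rintro rfl; linarith)
  have hsb : s < b := hs.2.lt_of_ne (by rintro rfl; linarith)
  set ε := min (s - a) (b - s)
  have hε : 0 < ε := lt_min (by linarith) (by linarith)
  have hleft : s - ε ∈ Icc a b := ⟨by linarith [min_le_left (s - a) (b - s)], by linarith⟩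
  have hright : s + ε ∈ Icc a b := ⟨by linarith, by linarith [min_le_right (s - a) (b - s)]⟩
  have hconv := hmid _ hleft _ hright
  rw [show (s - ε + (s + ε)) / 2 = s by ring, hfs] at hconv
  have hfright : f (s + ε) ≤ f t₀ := hmax hright
  have hmaxleft : f (s - ε) = f t₀ := le_antisymm (hmax hleft) (by linarith)
  linarith [hleast ⟨hleft, hmaxleft⟩]

theorem rpow_add_mul_rpow_le_mul_add_rpow {X c δ p : ℝ} (hX : 0 ≤ X) (hc : 0 ≤ c) (hδ : 0 < δ)
    (hp₀ : 0 ≤ p) (hp₁ : p ≤ 1) :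
    X ^ p + δ ^ (1 - p) * c ^ p ≤ (1 + δ) ^ (1 - p) * (X + c) ^ p := by
  have h1δ : 0 < 1 + δ := by linarith
  -- concavity at the points `X` and `c / δ` with weights `1/(1+δ)` and `δ/(1+δ)`
  have hconc := (Real.concaveOn_rpow hp₀ hp₁).2 (mem_Ici.2 hX) (mem_Ici.2 (div_nonneg hc hδ.le))
    (div_nonneg zero_le_one h1δ.le) (div_nonneg hδ.le h1δ.le) (by field_simp)
  simp only [smul_eq_mul] at hconc
  have hmean : 1 / (1 + δ) * X + δ / (1 + δ) * (c / δ) = (X + c) / (1 + δ) := by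
    field_simp
  rw [hmean, Real.div_rpow hc hδ.le, Real.div_rpow (add_nonneg hX hc) h1δ.le] at hconc
  have hδp : δ * (c ^ p / δ ^ p) = δ ^ (1 - p) * c ^ p := by
    rw [Real.rpow_sub hδ, Real.rpow_one]; ring
  have h1δp : (1 + δ) * ((X + c) ^ p / (1 + δ) ^ p) = (1 + δ) ^ (1 - p) * (X + c) ^ p := by
    rw [Real.rpow_sub h1δ, Real.rpow_one]; ring
  rw [← hδp, ← h1δp]
  have := mul_le_mul_of_nonneg_left hconc h1δ.le
  field_simp at this ⊢
  linarith

theorem rpow_le_of_add_le_add {X c A B δ p : ℝ} (hX : 0 ≤ X) (hc : 0 ≤ c) (hA : 0 ≤ A)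
    (hB : 0 ≤ B) (hδ : 0 < δ) (hp₀ : 0 ≤ p) (hp₁ : p ≤ 1) (h : X + c ≤ A + B) :
    X ^ p ≤ (1 + δ) ^ (1 - p) * (A ^ p + B ^ p) - δ ^ (1 - p) * c ^ p := by
  have hmono : (X + c) ^ p ≤ (A + B) ^ p := Real.rpow_le_rpow (add_nonneg hX hc) h hp₀
  have hsub : (A + B) ^ p ≤ A ^ p + B ^ p := Real.rpow_add_le_add_rpow hA hB hp₀ hp₁
  have h1δ : 0 ≤ (1 + δ) ^ (1 - p) := Real.rpow_nonneg (by linarith) _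
  nlinarith [rpow_add_mul_rpow_le_mul_add_rpow hX hc hδ hp₀ hp₁]

section Metric

variable {M : Type*} [MetricSpace M]

theorem IsNPC.dist_sq_le_of_dist_eq_half (hM : IsNPC M) {x₀ x₁ m : M}
    (h₀ : dist m x₀ = dist x₀ x₁ / 2) (h₁ : dist m x₁ = dist x₀ x₁ / 2) (z : M) :
    dist z m ^ 2 ≤
      (1 / 2) * dist z x₀ ^ 2 + (1 / 2) * dist z x₁ ^ 2 - (1 / 4) * dist x₀ x₁ ^ 2 := by
  obtain ⟨y, hy⟩ := hM x₀ x₁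
  have hmy : dist m y ^ 2 ≤ 0 := by
    have := hy m
    rw [h₀, h₁] at this
    linarith
  rw [show m = y from dist_le_zero.1 (by nlinarith [dist_nonneg (x := m) (y := y)])]
  exact hy z

namespace IsGeodesic

variable {γ : ℝ → M}

theorem continuousOn (hγ : IsGeodesic γ) : ContinuousOn γ (Icc 0 1) :=
  (LipschitzOnWith.of_dist_le_mul (K := (dist (γ 0) (γ 1)).toNNReal) fun x hx y hy ↦ by
    rw [hγ x hx y hy, Real.coe_toNNReal _ dist_nonneg, Real.dist_eq, mul_comm]).continuousOn

theorem dist_sq (hγ : IsGeodesic γ) {s u : ℝ} (hs : s ∈ Icc (0 : ℝ) 1) (hu : u ∈ Icc (0 : ℝ) 1) :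
    dist (γ s) (γ u) ^ 2 = (s - u) ^ 2 * dist (γ 0) (γ 1) ^ 2 := by
  rw [hγ s hs u hu, mul_pow, sq_abs]

theorem dist_midpoint_sq_le (hM : IsNPC M) (hγ : IsGeodesic γ) {s u : ℝ}
    (hs : s ∈ Icc (0 : ℝ) 1) (hu : u ∈ Icc (0 : ℝ) 1) (z : M) :
    dist (γ ((s + u) / 2)) z ^ 2 ≤
      (1 / 2) * dist (γ s) z ^ 2 + (1 / 2) * dist (γ u) z ^ 2 - (1 / 4) * dist (γ s) (γ u) ^ 2 := by
  have hm : (s + u) / 2 ∈ Icc (0 : ℝ) 1 := ⟨by linarith [hs.1, hu.1], by linarith [hs.2, hu.2]⟩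
  have half : ∀ v ∈ Icc (0 : ℝ) 1, |(s + u) / 2 - v| = |s - u| / 2 →
      dist (γ ((s + u) / 2)) (γ v) = dist (γ s) (γ u) / 2 := fun v hv hsv ↦ by
    rw [hγ _ hm v hv, hγ s hs u hu, hsv]; ring
  have h₀ := half s hs (by rw [← abs_two, ← abs_div, ← abs_neg]; congr 1; ring)
  have h₁ := half u hu (by rw [← abs_two, ← abs_div]; congr 1; ring)
  simpa only [dist_comm z] using hM.dist_sq_le_of_dist_eq_half h₀ h₁ z

theorem dist_sq_le (hM : IsNPC M) (hγ : IsGeodesic γ) {t : ℝ} (ht : t ∈ Icc (0 : ℝ) 1) (z : M) :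
    dist (γ t) z ^ 2 ≤ (1 - t) * dist (γ 0) z ^ 2 + t * dist (γ 1) z ^ 2
      - t * (1 - t) * dist (γ 0) (γ 1) ^ 2 := by
  set q : ℝ → ℝ := fun r ↦ (1 - r) * dist (γ 0) z ^ 2 + r * dist (γ 1) z ^ 2
      - r * (1 - r) * dist (γ 0) (γ 1) ^ 2
  suffices dist (γ t) z ^ 2 - q t ≤ 0 by linarith
  refine nonpos_of_midpoint_convex (f := fun r ↦ dist (γ r) z ^ 2 - q r) ?_ ?_
    (by simp [q]) (by simp [q]) ht
  · exact ((continuous_id.dist continuous_const).comp_continuousOn hγ.continuousOn |>.pow 2).sub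
      (by fun_prop)
  · intro s hs u hu
    have hcn := hγ.dist_midpoint_sq_le hM hs hu z
    rw [hγ.dist_sq hs hu] at hcn
    simp only [q]
    linarith

end IsGeodesic

end Metric

theorem stmt_2_general
    {M : Type*} [MetricSpace M]
    (hM : IsNPC M)
    (γ : ℝ → M) (hγ : IsGeodesic γ)
    (α : ℝ) (hα : α ∈ Set.Icc (1 : ℝ) 2)
    (δ : ℝ) (hδ : 0 < δ) (t : ℝ) (ht : t ∈ Set.Icc (0 : ℝ) 1) (z : M) :
    dist (γ t) z ^ α ≤
      (1 + δ) ^ (1 - α / 2) *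
        ((1 - t) ^ (α / 2) * dist (γ 0) z ^ α + t ^ (α / 2) * dist (γ 1) z ^ α) -
      δ ^ (1 - α / 2) * (t * (1 - t) * dist (γ 0) (γ 1) ^ 2) ^ (α / 2) := by
  have h1t : 0 ≤ 1 - t := by linarith [ht.2]
  have hsq : ∀ x y : M, (dist x y ^ 2) ^ (α / 2) = dist x y ^ α := fun x y ↦ by
    rw [← Real.rpow_natCast_mul dist_nonneg, Nat.cast_ofNat, mul_div_cancel₀ α two_ne_zero]
  have key := rpow_le_of_add_le_add (c := t * (1 - t) * dist (γ 0) (γ 1) ^ 2)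
    (A := (1 - t) * dist (γ 0) z ^ 2) (B := t * dist (γ 1) z ^ 2) (sq_nonneg (dist (γ t) z))
    (mul_nonneg (mul_nonneg ht.1 h1t) (sq_nonneg _)) (mul_nonneg h1t (sq_nonneg _))
    (mul_nonneg ht.1 (sq_nonneg _))
    hδ (by linarith [hα.1] : 0 ≤ α / 2) (by linarith [hα.2] : α / 2 ≤ 1)
    (by linarith [hγ.dist_sq_le hM ht z])
  rwa [Real.mul_rpow h1t (sq_nonneg _), Real.mul_rpow ht.1 (sq_nonneg _), hsq, hsq, hsq] at key

/-- Power transform CN inequality. -/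
theorem stmt_2
    {M : Type*} [MetricSpace M] [CompleteSpace M] [TopologicalSpace.SeparableSpace M]
    (hM : IsNPC M)
    (γ : ℝ → M) (hγ : IsGeodesic γ)
    (α : ℝ) (hα : α ∈ Set.Icc (1 : ℝ) 2)
    (δ : ℝ) (hδ : 0 < δ) (t : ℝ) (ht : t ∈ Set.Icc (0 : ℝ) 1) (z : M) :
    dist (γ t) z ^ α ≤
      (1 + δ) ^ (1 - α / 2) *
        ((1 - t) ^ (α / 2) * dist (γ 0) z ^ α + t ^ (α / 2) * dist (γ 1) z ^ α) -
      δ ^ (1 - α / 2) * (t * (1 - t) * dist (γ 0) (γ 1) ^ 2) ^ (α / 2) :=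
  stmt_2_general hM γ hγ α hα δ hδ t ht z
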